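/- arXiv:1812.08128 — 2 statements merged into one kernel-verified Lean document; each statement's English description precedes it below -/
import Mathlib

section
/- Let d ≥ 1, let C be a d-clutter on [n], let 𝕂 be a field, let e ∈ C be a circuit, and let K ⊆ [n] be a subset containing e. Then K is the unique maximal clique of C containing e (in particular e is exposed) if and only if the colon ideal (I_{C̄} : x_e) equals the ideal of R generated by the variables {x_v : v ∈ [n] \ K}. -/
open Finset MvPolynomial

/-- `S` is a clique of the `d`-clutter `C` on `[n]`: either `|S| < d` or
every `d`-subset of `S` is a circuit of `C`. -/
def IsClutterClique (n d : ℕ) (C : Finset (Finset (Fin n))) (S : Finset (Fin n)) : Prop :=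
  S.card < d ∨ ∀ t : Finset (Fin n), t ⊆ S → t.card = d → t ∈ C

/-- `S` is a maximal clique of the `d`-clutter `C`. -/
def IsMaxClutterClique (n d : ℕ) (C : Finset (Finset (Fin n))) (S : Finset (Fin n)) : Prop :=
  IsClutterClique n d C S ∧ ∀ T, IsClutterClique n d C T → S ⊆ T → S = T

/-- A circuit `e ∈ C` is exposed if it is contained in a unique maximal clique. -/
def IsExposedCircuit (n d : ℕ) (C : Finset (Finset (Fin n))) (e : Finset (Fin n)) : Prop :=
  e ∈ C ∧ ∃! S, IsMaxClutterClique n d C S ∧ e ⊆ S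

/-- A circuit is properly exposed if it is exposed and the unique maximal clique
containing it has more than `d` elements. -/
def IsProperlyExposedCircuit (n d : ℕ) (C : Finset (Finset (Fin n))) (e : Finset (Fin n)) :
    Prop :=
  IsExposedCircuit n d C e ∧ ∀ S, IsMaxClutterClique n d C S → e ⊆ S → d < S.card

/-- The complement clutter: all `d`-subsets of `[n]` not in `C`. -/
def complClutter (n d : ℕ) (C : Finset (Finset (Fin n))) : Finset (Finset (Fin n)) :=
  (Finset.powersetCard d (Finset.univ : Finset (Fin n))).filter (· ∉ C)

/-- The squarefree monomial `x_e = ∏_{i ∈ e} x_i`. -/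
noncomputable def xMon (𝕂 : Type) [Field 𝕂] (n : ℕ) (e : Finset (Fin n)) :
    MvPolynomial (Fin n) 𝕂 :=
  ∏ i ∈ e, X i

/-- The circuit ideal `I_C` of a clutter `C`, generated by the monomials `x_e`, `e ∈ C`. -/
noncomputable def circuitIdeal (𝕂 : Type) [Field 𝕂] (n : ℕ) (C : Finset (Finset (Fin n))) :
    Ideal (MvPolynomial (Fin n) 𝕂) :=
  Ideal.span (xMon 𝕂 n '' ↑C)

/-- An ideal is generated by a subset of the variables `{x_1,…,x_n}`. -/
def GeneratedByVariables (𝕂 : Type) [Field 𝕂] (n : ℕ) (I : Ideal (MvPolynomial (Fin n) 𝕂)) :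
    Prop :=
  ∃ S : Set (Fin n), I = Ideal.span ((fun i => (X i : MvPolynomial (Fin n) 𝕂)) '' S)

noncomputable def indF {n : ℕ} (e : Finset (Fin n)) : Fin n →₀ ℕ :=
  ∑ i ∈ e, Finsupp.single i 1

lemma indF_apply {n : ℕ} (e : Finset (Fin n)) (i : Fin n) :
    indF e i = if i ∈ e then 1 else 0 := by
  classical
  simp [indF, Finsupp.finset_sum_apply, Finsupp.single_apply, Finset.sum_ite_eq, eq_comm]

lemma indF_apply_ne {n : ℕ} (e : Finset (Fin n)) (i : Fin n) :
    indF e i ≠ 0 ↔ i ∈ e := by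
  rw [indF_apply]; split <;> simp_all

lemma indF_le_iff {n : ℕ} (e : Finset (Fin n)) (m : Fin n →₀ ℕ) :
    indF e ≤ m ↔ ∀ i ∈ e, m i ≠ 0 := by
  rw [Finsupp.le_iff]
  constructor
  · intro h i hi
    have h1 : (1 : ℕ) ≤ m i := by
      have := h i (by rw [Finsupp.mem_support_iff, indF_apply_ne]; exact hi)
      rwa [indF_apply, if_pos hi] at this
    omega
  · intro h i hi
    rw [Finsupp.mem_support_iff, indF_apply_ne] at hi
    rw [indF_apply, if_pos hi]
    exact Nat.one_le_iff_ne_zero.2 (h i hi)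

lemma indF_le_indF {n : ℕ} (f e : Finset (Fin n)) :
    indF f ≤ indF e ↔ f ⊆ e := by
  rw [indF_le_iff]
  exact ⟨fun h i hi => (indF_apply_ne e i).1 (h i hi),
    fun h i hi => (indF_apply_ne e i).2 (h hi)⟩

lemma xMon_eq (𝕂 : Type) [Field 𝕂] (n : ℕ) (e : Finset (Fin n)) :
    xMon 𝕂 n e = monomial (indF e) 1 := by
  classical
  induction e using Finset.induction_on with
  | empty => simp [xMon, indF]
  | @insert a s h ih =>
    rw [xMon, Finset.prod_insert h, ← xMon, ih]
    have : indF (insert a s) = Finsupp.single a 1 + indF s := by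
      rw [indF, Finset.sum_insert h]; rfl
    rw [this, X, monomial_mul, one_mul]

lemma mem_circuitIdeal (𝕂 : Type) [Field 𝕂] (n : ℕ) (D : Finset (Finset (Fin n)))
    (p : MvPolynomial (Fin n) 𝕂) :
    p ∈ circuitIdeal 𝕂 n D ↔ ∀ m ∈ p.support, ∃ f ∈ D, indF f ≤ m := by
  have himg : xMon 𝕂 n '' ↑D = (fun s => monomial s (1 : 𝕂)) '' (indF '' ↑D) := by
    rw [Set.image_image]
    exact Set.image_congr fun f _ => xMon_eq 𝕂 n f
  rw [circuitIdeal, himg, mem_ideal_span_monomial_image]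
  constructor
  · intro h m hm
    obtain ⟨si, ⟨f, hf, rfl⟩, hle⟩ := h m hm
    exact ⟨f, hf, hle⟩
  · intro h m hm
    obtain ⟨f, hf, hle⟩ := h m hm
    exact ⟨indF f, ⟨f, hf, rfl⟩, hle⟩

lemma mem_complClutter {n d : ℕ} {C : Finset (Finset (Fin n))} {f : Finset (Fin n)} :
    f ∈ complClutter n d C ↔ f.card = d ∧ f ∉ C := by
  simp [complClutter, Finset.mem_powersetCard]

lemma clique_subset {n d : ℕ} {C : Finset (Finset (Fin n))} {S T : Finset (Fin n)}
    (hS : IsClutterClique n d C S) (hTS : T ⊆ S) : IsClutterClique n d C T := by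
  rcases hS with h | h
  · rcases lt_or_ge T.card d with h' | h'
    · exact Or.inl h'
    · exact absurd (le_trans h' (Finset.card_le_card hTS)) (not_le.2 h)
  · exact Or.inr fun t ht htd => h t (ht.trans hTS) htd

lemma exists_maxClique {n d : ℕ} {C : Finset (Finset (Fin n))} {T : Finset (Fin n)}
    (hT : IsClutterClique n d C T) :
    ∃ S, IsMaxClutterClique n d C S ∧ T ⊆ S := by
  classical
  set F := Finset.univ.filter (fun S => IsClutterClique n d C S ∧ T ⊆ S) with hF
  have hTF : T ∈ F := by simp [hF, hT]
  obtain ⟨S, hSF, hmax⟩ := Finset.exists_max_image F Finset.card ⟨T, hTF⟩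
  simp only [hF, Finset.mem_filter, Finset.mem_univ, true_and] at hSF hmax
  refine ⟨S, ⟨hSF.1, fun T' hT' hST' => ?_⟩, hSF.2⟩
  exact Finset.eq_of_subset_of_card_le hST'
    (hmax T' ⟨hT', hSF.2.trans hST'⟩)

set_option maxHeartbeats 2000000 in
/-- `K` is the unique maximal clique of `C` containing the circuit `e`
iff the colon ideal `(I_{C̄} : x_e)` is generated by the variables indexed by `[n] \ K`. -/
theorem unique_maxClique_iff_colon_eq (n d : ℕ) (hd : 1 ≤ d) (𝕂 : Type) [Field 𝕂]
    (C : Finset (Finset (Fin n))) (hC : ∀ s ∈ C, s.card = d)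
    (e : Finset (Fin n)) (he : e ∈ C) (K : Finset (Fin n)) (heK : e ⊆ K) :
    (IsMaxClutterClique n d C K ∧ ∀ T, IsMaxClutterClique n d C T → e ⊆ T → T = K) ↔
      Submodule.colon (circuitIdeal 𝕂 n (complClutter n d C)) (Ideal.span {xMon 𝕂 n e}) =
        Ideal.span
          ((fun i => (X i : MvPolynomial (Fin n) 𝕂)) '' ↑(Finset.univ \ K)) := by
  constructor
  · rintro ⟨hKmax, huniq⟩
    apply le_antisymm
    · intro p hp
      rw [Ideal.mem_colon_span_singleton, mem_circuitIdeal] at hp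
      rw [mem_ideal_span_X_image]
      intro m hm
      by_contra hcon
      push_neg at hcon
      have hmem : m + indF e ∈ (p * xMon 𝕂 n e).support := by
        rw [mem_support_iff, xMon_eq, coeff_mul_monomial, mul_one]
        exact mem_support_iff.1 hm
      obtain ⟨f, hfD, hfle⟩ := hp _ hmem
      rw [mem_complClutter] at hfD
      have hfK : f ⊆ K := by
        intro i hif
        have h1 := (indF_le_iff f _).1 hfle i hif
        by_contra hiK
        have hie : i ∉ e := fun h => hiK (heK h)
        have hz : m i = 0 := hcon i (by simp [hiK])
        rw [Finsupp.add_apply, hz, indF_apply, if_neg hie] at h1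
        exact h1 rfl
      rcases hKmax.1 with h | h
      · have := Finset.card_le_card hfK
        omega
      · exact hfD.2 (h f hfK hfD.1)
    · rw [Ideal.span_le]
      rintro _ ⟨v, hv, rfl⟩
      rw [SetLike.mem_coe, Ideal.mem_colon_span_singleton]
      have hvK : v ∉ K := by simpa using hv
      have hve : v ∉ e := fun h => hvK (heK h)
      have hnc : ¬ IsClutterClique n d C (insert v e) := by
        intro hcl
        obtain ⟨S, hSmax, hsub⟩ := exists_maxClique hcl
        have hSK : S = K := huniq S hSmax ((Finset.subset_insert v e).trans hsub)
        exact hvK (hSK ▸ hsub (Finset.mem_insert_self v e))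
      simp only [IsClutterClique, not_or] at hnc
      push_neg at hnc
      obtain ⟨-, f, hf1, hf2, hf3⟩ := hnc
      have hfD : f ∈ complClutter n d C := mem_complClutter.2 ⟨hf2, hf3⟩
      have key : (X v : MvPolynomial (Fin n) 𝕂) * xMon 𝕂 n e
          = xMon 𝕂 n f * xMon 𝕂 n ((insert v e) \ f) := by
        rw [xMon, xMon, xMon, ← Finset.prod_union Finset.disjoint_sdiff,
          Finset.union_sdiff_of_subset hf1, Finset.prod_insert hve]
      rw [key]
      exact Ideal.mul_mem_right _ _ (Ideal.subset_span ⟨f, hfD, rfl⟩)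
  · intro hid
    have hclK : IsClutterClique n d C K := by
      refine Or.inr fun f hfK hfd => ?_
      by_contra hfC
      have hfD : f ∈ complClutter n d C := mem_complClutter.2 ⟨hfd, hfC⟩
      have hmem : xMon 𝕂 n (f \ e) ∈
          Submodule.colon (circuitIdeal 𝕂 n (complClutter n d C))
            (Ideal.span {xMon 𝕂 n e}) := by
        rw [Ideal.mem_colon_span_singleton]
        have key : xMon 𝕂 n (f \ e) * xMon 𝕂 n e
            = xMon 𝕂 n f * xMon 𝕂 n ((f ∪ e) \ f) := by
          rw [xMon, xMon, xMon, xMon, ← Finset.prod_union Finset.disjoint_sdiff,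
            Finset.union_sdiff_of_subset Finset.subset_union_left,
            ← Finset.prod_union Finset.sdiff_disjoint, Finset.sdiff_union_self_eq_union]
        rw [key]
        exact Ideal.mul_mem_right _ _ (Ideal.subset_span ⟨f, hfD, rfl⟩)
      rw [hid, mem_ideal_span_X_image] at hmem
      obtain ⟨i, hi, hine⟩ := hmem (indF (f \ e))
        (by classical
         rw [xMon_eq, support_monomial, if_neg one_ne_zero]; exact Finset.mem_singleton_self _)
      rw [indF_apply_ne] at hine
      have hiK : i ∈ K := hfK (Finset.mem_sdiff.1 hine).1
      simp at hi
      exact hi hiK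
    have hsub : ∀ T, IsClutterClique n d C T → e ⊆ T → T ⊆ K := by
      intro T hT heT v hvT
      by_contra hvK
      have hXv : (X v : MvPolynomial (Fin n) 𝕂) ∈
          Submodule.colon (circuitIdeal 𝕂 n (complClutter n d C))
            (Ideal.span {xMon 𝕂 n e}) := by
        rw [hid]; exact Ideal.subset_span ⟨v, by simp [hvK], rfl⟩
      rw [Ideal.mem_colon_span_singleton, mem_circuitIdeal] at hXv
      have hve : v ∉ e := fun h => hvK (heK h)
      have key : (X v : MvPolynomial (Fin n) 𝕂) * xMon 𝕂 n e
          = monomial (indF (insert v e)) 1 := by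
        rw [← xMon_eq]; exact (Finset.prod_insert hve).symm
      rw [key] at hXv
      obtain ⟨f, hfD, hfle⟩ := hXv (indF (insert v e))
        (by classical
         rw [support_monomial, if_neg one_ne_zero]; exact Finset.mem_singleton_self _)
      rw [mem_complClutter] at hfD
      have hfT : f ⊆ T := ((indF_le_indF _ _).1 hfle).trans (Finset.insert_subset hvT heT)
      rcases hT with h | h
      · have := Finset.card_le_card hfT
        omega
      · exact hfD.2 (h f hfT hfD.1)
    exact ⟨⟨hclK, fun T hT hKT => Finset.Subset.antisymm hKT (hsub T hT (heK.trans hKT))⟩,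
      fun T hT heT => hT.2 K hclK (hsub T hT.1 heT)⟩
end

section
/- Let d ≥ 1 and let e_1,…,e_k be distinct d-element subsets of [n]; for 0 ≤ j ≤ k let C_j denote the d-clutter consisting of all d-subsets of [n] except e_1,…,e_j. Then e_{j+1} is an exposed circuit of C_j for every 0 ≤ j ≤ k−1 if and only if (x_{e_1},…,x_{e_k}) is a linear quotients ordering in 𝕂[x_1,…,x_n], i.e., for every 0 ≤ j ≤ k−1 the colon ideal (⟨x_{e_1},…,x_{e_j}⟩ : x_{e_{j+1}}) is generated by a subset of the variables {x_1,…,x_n}. -/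
open Finset MvPolynomial

/-- The clutter `C_j` consisting of all `d`-subsets of `[n]` except `e i` for `i < j`. -/
def clutterUpTo (n d k : ℕ) (e : Fin k → Finset (Fin n)) (j : Fin k) :
    Finset (Finset (Fin n)) :=
  (Finset.powersetCard d (Finset.univ : Finset (Fin n))).filter
    (fun s => ∀ i : Fin k, i < j → e i ≠ s)

/-!
Both conditions say the same thing about the family `D_j = {e_i \ e_j : i < j}`, none of whose
members is empty: every member of `D_j` contains a singleton member of `D_j`.

Algebraically, `(⟨x_{e_i} : i < j⟩ : x_{e_j})` is the squarefree monomial ideal generated by the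
`x_s`, `s ∈ D_j`, and a squarefree monomial ideal without unit generator is generated by variables
exactly when each generator is divisible by a variable lying in the ideal.

Combinatorially, the cliques of `C_j` are the sets containing no `e_i` with `i < j`. A circuit `e`
is exposed exactly when the set `N` of vertices `v` for which `e ∪ {v}` is a clique is itself a
clique, since every clique through `e` lies in `N`. For `e = e_j`, these `v` are those with
`{v} ∉ D_j`.
-/

def SingletonsGenerate {α : Type*} (A : Set (Finset α)) : Prop :=
  ∀ s ∈ A, ∃ v ∈ s, {v} ∈ A

theorem Finset.sdiff_nonempty_of_card_eq_of_ne {α : Type*} [DecidableEq α] {s t : Finset α}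
    (hcard : s.card = t.card) (hne : s ≠ t) : (s \ t).Nonempty :=
  Finset.sdiff_nonempty.2 fun hst => hne (Finset.eq_of_subset_of_card_le hst hcard.ge)

namespace MvPolynomial

variable {σ R : Type*} [CommSemiring R]

theorem prod_X_eq_monomial_toFinsupp [DecidableEq σ] (s : Finset σ) :
    ∏ i ∈ s, (X i : MvPolynomial σ R) = monomial (Multiset.toFinsupp s.val) 1 := by
  induction s using Finset.induction_on with
  | empty => simp
  | insert a s ha ih =>
    rw [prod_insert ha, ih, Finset.insert_val_of_notMem ha, ← Multiset.singleton_add,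
      Multiset.toFinsupp_add, Multiset.toFinsupp_singleton, X, monomial_mul, one_mul]

theorem toFinsupp_val_le_iff [DecidableEq σ] {s : Finset σ} {m : σ →₀ ℕ} :
    Multiset.toFinsupp s.val ≤ m ↔ s ⊆ m.support := by
  simp only [Finsupp.le_iff, Multiset.toFinsupp_support, Finset.val_toFinset,
    Multiset.toFinsupp_apply]
  refine forall₂_congr fun i hi => ?_
  rw [Multiset.count_eq_one_of_mem s.nodup hi, Finsupp.mem_support_iff, Nat.one_le_iff_ne_zero]

theorem mem_span_prod_X_iff {A : Set (Finset σ)} {p : MvPolynomial σ R} :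
    p ∈ Ideal.span ((fun s => ∏ i ∈ s, X i) '' A) ↔ ∀ m ∈ p.support, ∃ s ∈ A, s ⊆ m.support := by
  classical
  simp only [prod_X_eq_monomial_toFinsupp]
  rw [← Set.image_image (fun m => monomial m (1 : R)), mem_ideal_span_monomial_image]
  simp only [Set.exists_mem_image, toFinsupp_val_le_iff]

theorem prod_X_mem_span_prod_X_iff [Nontrivial R] {A : Set (Finset σ)} {t : Finset σ} :
    ∏ i ∈ t, (X i : MvPolynomial σ R) ∈ Ideal.span ((fun s => ∏ i ∈ s, X i) '' A) ↔
      ∃ s ∈ A, s ⊆ t := by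
  classical
  rw [mem_span_prod_X_iff, prod_X_eq_monomial_toFinsupp, support_monomial, if_neg one_ne_zero]
  simp [Multiset.toFinsupp_support]

theorem colon_span_prod_X [DecidableEq σ] (A : Set (Finset σ)) (t : Finset σ) :
    (Ideal.span ((fun s => ∏ i ∈ s, (X i : MvPolynomial σ R)) '' A)).colon
        (Ideal.span {∏ i ∈ t, (X i : MvPolynomial σ R)}) =
      Ideal.span ((fun s => ∏ i ∈ s, X i) '' ((· \ t) '' A)) := by
  ext p
  have hsupp : (p * ∏ i ∈ t, X i).support =
      p.support.map (addRightEmbedding (Multiset.toFinsupp t.val)) := by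
    rw [prod_X_eq_monomial_toFinsupp, ← single_eq_monomial]
    exact AddMonoidAlgebra.support_coeff_mul_single p 1 (fun _ => by simp) _
  rw [Ideal.mem_colon_span_singleton, mem_span_prod_X_iff, mem_span_prod_X_iff, hsupp]
  simp only [Finset.mem_map, addRightEmbedding_apply, forall_exists_index, and_imp,
    forall_apply_eq_imp_iff₂, Finsupp.support_add_eq_union, Multiset.toFinsupp_support,
    Finset.val_toFinset, Set.exists_mem_image, sdiff_le_iff', Finset.sup_eq_union]

theorem span_X_image_eq_span_prod_X (S : Set σ) :
    Ideal.span (X '' S : Set (MvPolynomial σ R)) =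
      Ideal.span ((fun s => ∏ i ∈ s, X i) '' ((fun v => {v}) '' S)) := by
  rw [Set.image_image]
  simp only [Finset.prod_singleton]

theorem exists_span_X_eq_span_prod_X_iff [Nontrivial R] {A : Set (Finset σ)} (hA : ∅ ∉ A) :
    (∃ S : Set σ, Ideal.span ((fun s => ∏ i ∈ s, (X i : MvPolynomial σ R)) '' A) =
        Ideal.span ((fun i => X i) '' S)) ↔ SingletonsGenerate A := by
  constructor
  · rintro ⟨S, hS⟩ s hs
    have hsS : ∏ i ∈ s, (X i : MvPolynomial σ R) ∈ Ideal.span (X '' S) :=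
      hS ▸ Ideal.subset_span (Set.mem_image_of_mem _ hs)
    rw [span_X_image_eq_span_prod_X, prod_X_mem_span_prod_X_iff] at hsS
    obtain ⟨_, ⟨v, hvS, rfl⟩, hvs⟩ := hsS
    have hvA : ∏ i ∈ {v}, (X i : MvPolynomial σ R) ∈ Ideal.span ((fun s => ∏ i ∈ s, X i) '' A) :=
      hS ▸ by simpa using Ideal.subset_span (Set.mem_image_of_mem X hvS)
    obtain ⟨b, hbA, hbv⟩ := prod_X_mem_span_prod_X_iff.1 hvA
    obtain rfl | rfl := Finset.subset_singleton_iff.1 hbv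
    · exact absurd hbA hA
    · exact ⟨v, Finset.singleton_subset_iff.1 hvs, hbA⟩
  · classical
    intro hA
    refine ⟨{v | {v} ∈ A}, le_antisymm (Ideal.span_le.2 ?_) (Ideal.span_le.2 ?_)⟩
    · rintro _ ⟨s, hs, rfl⟩
      obtain ⟨v, hvs, hvA⟩ := hA s hs
      dsimp only
      rw [SetLike.mem_coe, ← Finset.mul_prod_erase s _ hvs]
      exact Ideal.mul_mem_right _ _ (Ideal.subset_span ⟨v, hvA, rfl⟩)
    · rintro _ ⟨v, hvA, rfl⟩
      have hv : ∏ i ∈ {v}, (X i : MvPolynomial σ R) ∈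
          Ideal.span ((fun s => ∏ i ∈ s, X i) '' A) := Ideal.subset_span ⟨{v}, hvA, rfl⟩
      simpa using hv

end MvPolynomial

section Clutter

variable {n d : ℕ} {C : Finset (Finset (Fin n))}

theorem IsClutterClique.mono {S T : Finset (Fin n)} (hS : IsClutterClique n d C S)
    (hTS : T ⊆ S) : IsClutterClique n d C T := by
  rcases hS with h | h
  · exact Or.inl ((Finset.card_le_card hTS).trans_lt h)
  · exact Or.inr fun t ht hc => h t (ht.trans hTS) hc

theorem IsClutterClique.exists_isMaxClutterClique_superset {S : Finset (Fin n)}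
    (hS : IsClutterClique n d C S) : ∃ T, IsMaxClutterClique n d C T ∧ S ⊆ T := by
  classical
  obtain ⟨T, ⟨hT, hmax⟩⟩ := Finset.exists_maximal
    (s := Finset.univ.filter fun T => IsClutterClique n d C T ∧ S ⊆ T) ⟨S, by simp [hS]⟩
  simp only [Finset.mem_filter, Finset.mem_univ, true_and] at hT hmax
  exact ⟨T, ⟨hT.1, fun U hU hTU => hTU.antisymm (hmax ⟨hU, hT.2.trans hTU⟩ hTU)⟩, hT.2⟩

open Classical in
noncomputable def cliqueNeighborhood (n d : ℕ) (C : Finset (Finset (Fin n)))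
    (e : Finset (Fin n)) : Finset (Fin n) :=
  Finset.univ.filter fun v => IsClutterClique n d C (insert v e)

theorem mem_cliqueNeighborhood {e : Finset (Fin n)} {v : Fin n} :
    v ∈ cliqueNeighborhood n d C e ↔ IsClutterClique n d C (insert v e) := by
  simp [cliqueNeighborhood]

theorem isExposedCircuit_iff_isClutterClique_cliqueNeighborhood {e : Finset (Fin n)}
    (he : e ∈ C) (hclique : IsClutterClique n d C e) :
    IsExposedCircuit n d C e ↔ IsClutterClique n d C (cliqueNeighborhood n d C e) := by
  have subset_nbhd : ∀ T, IsClutterClique n d C T → e ⊆ T → T ⊆ cliqueNeighborhood n d C e :=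
    fun T hT heT v hv => mem_cliqueNeighborhood.2 (hT.mono (Finset.insert_subset hv heT))
  have e_subset : e ⊆ cliqueNeighborhood n d C e := fun v hv =>
    mem_cliqueNeighborhood.2 (by rwa [Finset.insert_eq_of_mem hv])
  constructor
  · rintro ⟨-, S, ⟨hSmax, -⟩, huniq⟩
    refine hSmax.1.mono fun v hv => ?_
    obtain ⟨T, hTmax, hvT⟩ :=
      (mem_cliqueNeighborhood.1 hv).exists_isMaxClutterClique_superset
    rw [← huniq T ⟨hTmax, (Finset.subset_insert v e).trans hvT⟩]
    exact hvT (Finset.mem_insert_self v e)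
  · intro hN
    refine ⟨he, _, ⟨⟨hN, fun T hT hNT => hNT.antisymm ?_⟩, e_subset⟩, ?_⟩
    · exact subset_nbhd T hT (e_subset.trans hNT)
    · rintro T ⟨⟨hT, hTmax⟩, heT⟩
      exact hTmax _ hN (subset_nbhd T hT heT)

end Clutter

section ClutterUpTo

variable {n d k : ℕ} {e : Fin k → Finset (Fin n)} {j : Fin k}

theorem mem_clutterUpTo {s : Finset (Fin n)} :
    s ∈ clutterUpTo n d k e j ↔ s.card = d ∧ ∀ i < j, e i ≠ s := by
  simp [clutterUpTo]

theorem isClutterClique_clutterUpTo_iff (hcard : ∀ i, (e i).card = d) {S : Finset (Fin n)} :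
    IsClutterClique n d (clutterUpTo n d k e j) S ↔ ∀ i < j, ¬e i ⊆ S := by
  constructor
  · rintro (h | h) i hij hsub
    · exact (hcard i ▸ Finset.card_le_card hsub).not_gt h
    · exact (mem_clutterUpTo.1 (h (e i) hsub (hcard i))).2 i hij rfl
  · exact fun h => Or.inr fun t ht htd =>
      mem_clutterUpTo.2 ⟨htd, fun i hij hit => h i hij (hit ▸ ht)⟩

theorem sdiff_nonempty_of_lt (hinj : Function.Injective e) (hcard : ∀ i, (e i).card = d)
    {i : Fin k} (hij : i < j) : (e i \ e j).Nonempty :=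
  Finset.sdiff_nonempty_of_card_eq_of_ne ((hcard i).trans (hcard j).symm)
    (hinj.ne hij.ne)

theorem mem_cliqueNeighborhood_clutterUpTo_iff (hinj : Function.Injective e)
    (hcard : ∀ i, (e i).card = d) {v : Fin n} :
    v ∈ cliqueNeighborhood n d (clutterUpTo n d k e j) (e j) ↔
      {v} ∉ (fun i => e i \ e j) '' {i | i < j} := by
  rw [mem_cliqueNeighborhood, isClutterClique_clutterUpTo_iff hcard]
  simp only [Set.mem_image, Set.mem_ofPred_eq, not_exists, not_and]
  refine forall₂_congr fun i hij => ?_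
  rw [Finset.insert_eq, ← Finset.sup_eq_union, ← sdiff_le_iff',
    Finset.subset_singleton_iff, or_iff_right (sdiff_nonempty_of_lt hinj hcard hij).ne_empty]

theorem isExposedCircuit_clutterUpTo_iff (hinj : Function.Injective e)
    (hcard : ∀ i, (e i).card = d) (j : Fin k) :
    IsExposedCircuit n d (clutterUpTo n d k e j) (e j) ↔
      SingletonsGenerate ((fun i => e i \ e j) '' {i | i < j}) := by
  have hmem : e j ∈ clutterUpTo n d k e j :=
    mem_clutterUpTo.2 ⟨hcard j, fun i hij => hinj.ne hij.ne⟩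
  have hclique : IsClutterClique n d (clutterUpTo n d k e j) (e j) :=
    (isClutterClique_clutterUpTo_iff hcard).2 fun i hij =>
      Finset.sdiff_nonempty.1 (sdiff_nonempty_of_lt hinj hcard hij)
  rw [isExposedCircuit_iff_isClutterClique_cliqueNeighborhood hmem hclique,
    isClutterClique_clutterUpTo_iff hcard, SingletonsGenerate, Set.forall_mem_image]
  refine forall₂_congr fun i _ => ?_
  simp only [Finset.not_subset, mem_cliqueNeighborhood_clutterUpTo_iff hinj hcard, not_not,
    Finset.mem_sdiff]
  -- a singleton `{v} = e_{i'} \ e_j` forces `v ∉ e_j`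
  refine ⟨fun ⟨v, hv, hD⟩ => ⟨v, ⟨hv, ?_⟩, hD⟩, fun ⟨v, hv, hD⟩ => ⟨v, hv.1, hD⟩⟩
  obtain ⟨i', -, hi'⟩ := hD
  exact (Finset.mem_sdiff.1 (hi' ▸ Finset.mem_singleton_self v)).2

theorem generatedByVariables_colon_iff (𝕂 : Type) [Field 𝕂] (hinj : Function.Injective e)
    (hcard : ∀ i, (e i).card = d) (j : Fin k) :
    GeneratedByVariables 𝕂 n
        (Submodule.colon (Ideal.span ((fun i => xMon 𝕂 n (e i)) '' {i : Fin k | i < j}))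
          (Ideal.span {xMon 𝕂 n (e j)})) ↔
      SingletonsGenerate ((fun i => e i \ e j) '' {i | i < j}) := by
  have hempty : ∅ ∉ (fun i => e i \ e j) '' {i | i < j} := fun ⟨i, hij, hi⟩ =>
    (sdiff_nonempty_of_lt hinj hcard hij).ne_empty hi
  rw [← Set.image_image (xMon 𝕂 n) e]
  unfold GeneratedByVariables xMon
  rw [MvPolynomial.colon_span_prod_X, Set.image_image (· \ e j) e]
  exact MvPolynomial.exists_span_X_eq_span_prod_X_iff hempty

end ClutterUpTo

theorem exposed_sequence_iff_linear_quotients_general (n d k : ℕ) (𝕂 : Type) [Field 𝕂]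
    (e : Fin k → Finset (Fin n)) (hinj : Function.Injective e)
    (hcard : ∀ i, (e i).card = d) :
    (∀ j : Fin k, IsExposedCircuit n d (clutterUpTo n d k e j) (e j)) ↔
      ∀ j : Fin k, GeneratedByVariables 𝕂 n
        (Submodule.colon
          (Ideal.span ((fun i => xMon 𝕂 n (e i)) '' {i : Fin k | i < j}))
          (Ideal.span {xMon 𝕂 n (e j)})) :=
  forall_congr' fun j => (isExposedCircuit_clutterUpTo_iff hinj hcard j).trans
    (generatedByVariables_colon_iff 𝕂 hinj hcard j).symm

/-- each `e_{j+1}` is an exposed circuit of `C_j` iff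
`(x_{e_1},…,x_{e_k})` is a linear quotients ordering. -/
theorem exposed_sequence_iff_linear_quotients (n d k : ℕ) (hd : 1 ≤ d) (𝕂 : Type) [Field 𝕂]
    (e : Fin k → Finset (Fin n)) (hinj : Function.Injective e)
    (hcard : ∀ i, (e i).card = d) :
    (∀ j : Fin k, IsExposedCircuit n d (clutterUpTo n d k e j) (e j)) ↔
      ∀ j : Fin k, GeneratedByVariables 𝕂 n
        (Submodule.colon
          (Ideal.span ((fun i => xMon 𝕂 n (e i)) '' {i : Fin k | i < j}))
          (Ideal.span {xMon 𝕂 n (e j)})) :=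
  exposed_sequence_iff_linear_quotients_general n d k 𝕂 e hinj hcard
end
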